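/- For every c > 0, the distribution F_c²(δ_∞) is supported on ℕ⁺ and has finite mean; consequently, for every μ ∈ S the distribution F_c²(μ) lies in S₁. -/

import Mathlib

open Filter Topology Set

noncomputable section

/-- Convolution of two (sub)probability mass functions on `ℕ∞ = ℕ⁺ ∪ {∞} ∪ {0}`,
with the convention `∞ + anything = ∞`. -/
def conv (μ ν : ℕ∞ → ℝ) : ℕ∞ → ℝ :=
  fun k => ∑' p : ℕ∞ × ℕ∞, if p.1 + p.2 = k then μ p.1 * ν p.2 else 0

/-- The factor `(l(l-1)/2) / (l(l-1)/2 + c)`, the probability that the coalescence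
from `l` to `l-1` lineages happens before an independent `Exp(c)` time. -/
def kingmanFactor (c : ℝ) (l : ℕ) : ℝ :=
  ((l : ℝ) * ((l : ℝ) - 1) / 2) / ((l : ℝ) * ((l : ℝ) - 1) / 2 + c)

/-- `pK c j i` : the probability that Kingman's coalescent started from `j` lineages
has exactly `i` lineages at an independent exponential time with rate `c`. -/
def pK (c : ℝ) (j : ℕ∞) (i : ℕ) : ℝ :=
  (c / ((i : ℝ) * ((i : ℝ) - 1) / 2 + c)) *
    (if j = ⊤ then ∏' l : ℕ, kingmanFactor c (i + 1 + l)
     else ∏ l ∈ Finset.Icc (i + 1) j.toNat, kingmanFactor c l)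

/-- The mass that `F_c μ` puts on a finite `k ∈ ℕ⁺`. -/
def FcFin (c : ℝ) (μ : ℕ∞ → ℝ) (k : ℕ) : ℝ :=
  ∑' j : ℕ∞, if (k : ℕ∞) ≤ j then conv μ μ j * pK c j k else 0

/-- The map `F_c` on distributions on `ℕ⁺ ∪ {∞}`; the mass at `∞` is the remaining mass. -/
def Fc (c : ℝ) (μ : ℕ∞ → ℝ) : ℕ∞ → ℝ :=
  fun k =>
    if k = ⊤ then 1 - ∑' n : ℕ, FcFin c μ n
    else if k = 0 then 0 else FcFin c μ k.toNat

/-- `μ` is a probability distribution on `ℕ⁺ ∪ {∞}` (no mass at `0`). -/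
def IsDist (μ : ℕ∞ → ℝ) : Prop :=
  (∀ k, 0 ≤ μ k) ∧ μ 0 = 0 ∧ HasSum μ 1

/-- The mean of a distribution on `ℕ⁺ ∪ {∞}` (ignoring the mass at `∞`). -/
def distMean (μ : ℕ∞ → ℝ) : ℝ := ∑' n : ℕ, (n : ℝ) * μ (n : ℕ∞)

/-- `μ` belongs to `S₁`: a probability distribution on `ℕ⁺` with finite mean. -/
def MemS1 (μ : ℕ∞ → ℝ) : Prop :=
  IsDist μ ∧ μ ⊤ = 0 ∧ Summable (fun n : ℕ => (n : ℝ) * μ (n : ℕ∞))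

/-- `StDom μ ν` : `μ ⪯ ν` in the usual stochastic order, i.e.
`μ([0,x]) ≥ ν([0,x])` for all `x ∈ [0,∞]`. -/
def StDom (μ ν : ℕ∞ → ℝ) : Prop :=
  ∀ x : ℕ∞, (∑' k : ℕ∞, if k ≤ x then ν k else 0) ≤ ∑' k : ℕ∞, if k ≤ x then μ k else 0

/-- The unit point mass at `a`. -/
def delta (a : ℕ∞) : ℕ∞ → ℝ := fun k => if k = a then 1 else 0

end

/-!
Stopped at an independent `Exp(c)` time, Kingman's coalescent started from any `j ≤ ∞` lineages
keeps exactly `k` of them with probability at most `c / (k(k-1)/2 + c) = O(k⁻²)`; so for every `μ`,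
`ν = F_c μ` lives on `ℕ⁺` and has a finite `√`-moment. Started from `j < ∞` lineages, more than
`x` are left with probability at most `∑_{l > x} c / (l(l-1)/2) = 2c/x` (Weierstrass' product
inequality), so the mean number left is at most `x + 2cj/x`, that is `1 + 2√(2cj)` for
`x = ⌈√(2cj)⌉`. Since `√(a + b) ≤ √a + √b`, `ν ∗ ν` again has a finite `√`-moment, hence
`F_c ν` has finite mean.
-/

theorem one_sub_sum_le_prod_one_sub {ι : Type*} (s : Finset ι) {f : ι → ℝ}
    (h0 : ∀ i ∈ s, 0 ≤ f i) (h1 : ∀ i ∈ s, f i ≤ 1) :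
    1 - ∑ i ∈ s, f i ≤ ∏ i ∈ s, (1 - f i) := by
  classical
  induction s using Finset.induction_on with
  | empty => simp
  | insert a s ha ih =>
    simp only [Finset.mem_insert, forall_eq_or_imp] at h0 h1
    rw [Finset.sum_insert ha, Finset.prod_insert ha]
    have hs : 0 ≤ ∑ i ∈ s, f i := Finset.sum_nonneg h0.2
    nlinarith [mul_le_mul_of_nonneg_left (ih h0.2 h1.2) (sub_nonneg.2 h1.1)]

theorem sum_natCast_mul_le_mul_sum {s : Finset ℕ} {m : ℕ} {f : ℕ → ℝ}
    (hf : ∀ k ∈ s, 0 ≤ f k) (hs : ∀ k ∈ s, k ≤ m) :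
    ∑ k ∈ s, (k : ℝ) * f k ≤ m * ∑ k ∈ s, f k := by
  rw [Finset.mul_sum]
  exact Finset.sum_le_sum fun k hk =>
    mul_le_mul_of_nonneg_right (by exact_mod_cast hs k hk) (hf k hk)

theorem Real.sqrt_add_le_add_sqrt {x y : ℝ} (hx : 0 ≤ x) (hy : 0 ≤ y) : √(x + y) ≤ √x + √y := by
  rw [Real.sqrt_le_iff]
  refine ⟨by positivity, ?_⟩
  nlinarith [Real.sq_sqrt hx, Real.sq_sqrt hy, Real.sqrt_nonneg x, Real.sqrt_nonneg y]

theorem hasSum_tsum_swap_of_nonneg {α β : Type*} {f : α × β → ℝ} (hf : 0 ≤ f) {g : α → ℝ} {s : ℝ}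
    (hrow : ∀ a, HasSum (fun b => f (a, b)) (g a)) (hg : HasSum g s) :
    HasSum (fun b => ∑' a, f (a, b)) s := by
  have hsum : Summable f := (summable_prod_of_nonneg hf).2
    ⟨fun a => (hrow a).summable, hg.summable.congr fun a => ((hrow a).tsum_eq).symm⟩
  have hfs : HasSum f s := hg.unique (hsum.hasSum.prod_fiberwise hrow) ▸ hsum.hasSum
  have hswap : HasSum (fun p : β × α => f p.swap) s := (Equiv.prodComm β α).hasSum_iff.2 hfs
  exact hswap.prod_fiberwise fun b => (hswap.summable.prod_factor b).hasSum

theorem hasSum_tsum_ite_eq {α β : Type*} [DecidableEq β] {f : α → ℝ} {s : ℝ} (hf : HasSum f s)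
    (g : α → β) :
    HasSum (fun b => ∑' a, if g a = b then f a else 0) s := by
  refine (hf.tsum_fiberwise g).congr_fun fun b => ?_
  rw [tsum_subtype]
  exact tsum_congr fun a => by by_cases h : g a = b <;> simp [h]

theorem ENat.hasSum_natCast_iff {M : Type*} [AddCommMonoid M] [TopologicalSpace M] {f : ℕ∞ → M}
    (hf : f ⊤ = 0) {a : M} : HasSum (fun n : ℕ => f n) a ↔ HasSum f a :=
  Nat.cast_injective.hasSum_iff fun k hk => by
    induction k using ENat.recTopCoe with
    | top => exact hf
    | coe n => exact absurd ⟨n, rfl⟩ hk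

theorem ENat.summable_natCast_iff {M : Type*} [AddCommMonoid M] [TopologicalSpace M]
    {f : ℕ∞ → M} (hf : f ⊤ = 0) : Summable (fun n : ℕ => f n) ↔ Summable f :=
  exists_congr fun _ => ENat.hasSum_natCast_iff hf

theorem ENat.sqrt_toNat_add_le (a b : ℕ∞) :
    √((a + b).toNat : ℝ) ≤ √(a.toNat : ℝ) + √(b.toNat : ℝ) := by
  induction a using ENat.recTopCoe with
  | top => simp [Real.sqrt_nonneg]
  | coe a =>
    induction b using ENat.recTopCoe with
    | top => simp [Real.sqrt_nonneg]
    | coe b =>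
      simp only [← Nat.cast_add, ENat.toNat_natCast]
      push_cast
      exact Real.sqrt_add_le_add_sqrt (Nat.cast_nonneg a) (Nat.cast_nonneg b)

noncomputable section

section Kingman

variable {c : ℝ}

/-- `p_c(l, l)`: the exponential clock rings before the first coalescence from `l` lineages. -/
def kingmanHold (c : ℝ) (l : ℕ) : ℝ := c / ((l : ℝ) * ((l : ℝ) - 1) / 2 + c)

/-- For `x ≤ j`, the probability that at most `x` of `j` lineages are left: the coalescences
`j → j - 1 → ⋯ → x` all come before the exponential clock. -/
def kingmanCdf (c : ℝ) (j : ℕ∞) (x : ℕ) : ℝ :=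
  if j = ⊤ then ∏' l : ℕ, kingmanFactor c (x + 1 + l)
  else ∏ l ∈ Finset.Icc (x + 1) j.toNat, kingmanFactor c l

theorem pK_eq_kingmanHold_mul_kingmanCdf (c : ℝ) (j : ℕ∞) (i : ℕ) :
    pK c j i = kingmanHold c i * kingmanCdf c j i := rfl

theorem coalescenceRate_add_pos (hc : 0 < c) (l : ℕ) : 0 < (l : ℝ) * ((l : ℝ) - 1) / 2 + c := by
  rw [← Nat.cast_choose_two]
  positivity

theorem kingmanHold_pos (hc : 0 < c) (l : ℕ) : 0 < kingmanHold c l :=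
  div_pos hc (coalescenceRate_add_pos hc l)

theorem kingmanHold_le_one (hc : 0 < c) (l : ℕ) : kingmanHold c l ≤ 1 := by
  rw [kingmanHold, div_le_one (coalescenceRate_add_pos hc l), ← Nat.cast_choose_two]
  exact le_add_of_nonneg_left (Nat.cast_nonneg _)

theorem kingmanFactor_eq_one_sub (hc : 0 < c) (l : ℕ) :
    kingmanFactor c l = 1 - kingmanHold c l := by
  rw [eq_sub_iff_add_eq, kingmanFactor, kingmanHold, ← add_div,
    div_self (coalescenceRate_add_pos hc l).ne']

theorem kingmanFactor_nonneg (hc : 0 < c) (l : ℕ) : 0 ≤ kingmanFactor c l := by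
  rw [kingmanFactor_eq_one_sub hc]
  linarith [kingmanHold_le_one hc l]

theorem kingmanFactor_le_one (hc : 0 < c) (l : ℕ) : kingmanFactor c l ≤ 1 := by
  rw [kingmanFactor_eq_one_sub hc]
  linarith [kingmanHold_pos hc l]

theorem kingmanFactor_one : kingmanFactor c 1 = 0 := by
  simp [kingmanFactor]

theorem kingmanHold_le (hc : 0 < c) {l : ℕ} (hl : 2 ≤ l) :
    kingmanHold c l ≤ 2 * c / (l * (l - 1)) := by
  have hl' : (2 : ℝ) ≤ l := by exact_mod_cast hl
  have hpos : 0 < (l : ℝ) * ((l : ℝ) - 1) / 2 := by nlinarith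
  calc kingmanHold c l ≤ c / ((l : ℝ) * ((l : ℝ) - 1) / 2) :=
        div_le_div_of_nonneg_left hc.le hpos (le_add_of_nonneg_right hc.le)
    _ = 2 * c / (l * (l - 1)) := by field_simp

theorem sum_kingmanHold_Icc_le (hc : 0 < c) {x : ℕ} (hx : 1 ≤ x) (j : ℕ) :
    ∑ l ∈ Finset.Icc (x + 1) j, kingmanHold c l ≤ 2 * c / x := by
  have telescope : ∀ j, x ≤ j →
      ∑ l ∈ Finset.Icc (x + 1) j, kingmanHold c l ≤ 2 * c / x - 2 * c / j := by
    intro j hj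
    induction j, hj using Nat.le_induction with
    | base => simp
    | succ j hj ih =>
      have hstep := kingmanHold_le hc (l := j + 1) (by omega)
      rw [Finset.sum_Icc_succ_top (by omega)]
      push_cast at hstep ⊢
      rw [add_sub_cancel_right] at hstep
      have hj0 : (j : ℝ) ≠ 0 := Nat.cast_ne_zero.2 (by omega)
      have htel : 2 * c / ((j + 1) * j) = 2 * c / j - 2 * c / (j + 1) := by
        field_simp
        ring
      linarith
  rcases le_or_gt x j with hj | hj
  · linarith [telescope j hj, show 0 ≤ 2 * c / j by positivity]
  · rw [Finset.Icc_eq_empty (by omega), Finset.sum_empty]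
    positivity

theorem summable_sqrt_mul_kingmanHold (hc : 0 < c) :
    Summable fun k : ℕ => √k * kingmanHold c k := by
  refine ((Real.summable_nat_rpow.2 (by norm_num : (-(3 / 2) : ℝ) < -1)).mul_left
    (4 * c)).of_norm_bounded_eventually_nat ?_
  filter_upwards [eventually_ge_atTop 2] with k hk
  have hk' : (2 : ℝ) ≤ k := by exact_mod_cast hk
  have hpow : (k : ℝ) ^ (-(3 / 2) : ℝ) * (k : ℝ) ^ 2 = √k := by
    rw [Real.sqrt_eq_rpow, ← Real.rpow_natCast, ← Real.rpow_add (by linarith)]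
    norm_num
  have hhold : kingmanHold c k ≤ 4 * c / (k : ℝ) ^ 2 := by
    refine (kingmanHold_le hc hk).trans ?_
    rw [div_le_div_iff₀ (by nlinarith) (by positivity)]
    nlinarith [mul_nonneg (mul_nonneg hc.le (Nat.cast_nonneg k)) (sub_nonneg.2 hk')]
  rw [Real.norm_of_nonneg (mul_nonneg (Real.sqrt_nonneg _) (kingmanHold_pos hc k).le)]
  calc √k * kingmanHold c k ≤ √k * (4 * c / (k : ℝ) ^ 2) :=
        mul_le_mul_of_nonneg_left hhold (Real.sqrt_nonneg _)
    _ = 4 * c * (k : ℝ) ^ (-(3 / 2) : ℝ) := by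
        rw [← hpow]
        field_simp

theorem summable_kingmanHold (hc : 0 < c) : Summable (kingmanHold c) := by
  refine (summable_sqrt_mul_kingmanHold hc).of_norm_bounded_eventually_nat ?_
  filter_upwards [eventually_ge_atTop 1] with k hk
  rw [Real.norm_of_nonneg (kingmanHold_pos hc k).le]
  exact le_mul_of_one_le_left (kingmanHold_pos hc k).le
    (Real.one_le_sqrt.2 (by exact_mod_cast hk))

theorem kingmanCdf_natCast (j x : ℕ) :
    kingmanCdf c j x = ∏ l ∈ Finset.Icc (x + 1) j, kingmanFactor c l := by
  simp [kingmanCdf]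

theorem kingmanCdf_top (x : ℕ) : kingmanCdf c ⊤ x = ∏' l : ℕ, kingmanFactor c (x + 1 + l) :=
  if_pos rfl

theorem multipliable_kingmanFactor (hc : 0 < c) (n : ℕ) :
    Multipliable fun l => kingmanFactor c (n + l) :=
  (Real.multipliable_one_add_of_summable ((summable_nat_add_iff n).2
    (summable_kingmanHold hc)).neg).congr fun l => by
      rw [kingmanFactor_eq_one_sub hc, add_comm n, sub_eq_add_neg]

theorem tendsto_kingmanCdf_natCast (hc : 0 < c) (x : ℕ) :
    Tendsto (fun m : ℕ => kingmanCdf c (x + m : ℕ) x) atTop (𝓝 (kingmanCdf c ⊤ x)) := by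
  rw [kingmanCdf_top]
  refine ((multipliable_kingmanFactor hc (x + 1)).hasProd.tendsto_prod_nat).congr fun m => ?_
  rw [kingmanCdf_natCast, ← Finset.Ico_add_one_right_eq_Icc, Finset.prod_Ico_eq_prod_range,
    show x + m + 1 - (x + 1) = m by omega]

theorem kingmanCdf_top_mem (hc : 0 < c) {x : ℕ} {S : Set ℝ} (hS : IsClosed S)
    (h : ∀ j : ℕ, kingmanCdf c j x ∈ S) : kingmanCdf c ⊤ x ∈ S :=
  hS.mem_of_tendsto (tendsto_kingmanCdf_natCast hc x) (Eventually.of_forall fun _ => h _)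

theorem kingmanCdf_nonneg (hc : 0 < c) (j : ℕ∞) (x : ℕ) : 0 ≤ kingmanCdf c j x := by
  have hfin (j : ℕ) : kingmanCdf c j x ∈ Set.Ici 0 := by
    rw [kingmanCdf_natCast]
    exact Finset.prod_nonneg fun l _ => kingmanFactor_nonneg hc l
  induction j using ENat.recTopCoe with
  | top => exact kingmanCdf_top_mem hc isClosed_Ici hfin
  | coe j => exact hfin j

theorem kingmanCdf_le_one (hc : 0 < c) (j : ℕ∞) (x : ℕ) : kingmanCdf c j x ≤ 1 := by
  have hfin (j : ℕ) : kingmanCdf c j x ∈ Set.Iic 1 := by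
    rw [kingmanCdf_natCast]
    exact Finset.prod_le_one (fun l _ => kingmanFactor_nonneg hc l)
      fun l _ => kingmanFactor_le_one hc l
  induction j using ENat.recTopCoe with
  | top => exact kingmanCdf_top_mem hc isClosed_Iic hfin
  | coe j => exact hfin j

theorem one_sub_le_kingmanCdf (hc : 0 < c) {x : ℕ} (hx : 1 ≤ x) (j : ℕ∞) :
    1 - 2 * c / x ≤ kingmanCdf c j x := by
  have hfin (j : ℕ) : kingmanCdf c j x ∈ Set.Ici (1 - 2 * c / x) := by
    have hprod := one_sub_sum_le_prod_one_sub (Finset.Icc (x + 1) j)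
      (fun l _ => (kingmanHold_pos hc l).le) fun l _ => kingmanHold_le_one hc l
    rw [Set.mem_Ici, kingmanCdf_natCast,
      Finset.prod_congr rfl fun l _ => kingmanFactor_eq_one_sub hc l]
    linarith [sum_kingmanHold_Icc_le hc hx j]
  induction j using ENat.recTopCoe with
  | top => exact kingmanCdf_top_mem hc isClosed_Ici hfin
  | coe j => exact hfin j

theorem kingmanCdf_eq_mul_succ (hc : 0 < c) {j : ℕ∞} {x : ℕ} (h : (x : ℕ∞) < j) :
    kingmanCdf c j x = kingmanFactor c (x + 1) * kingmanCdf c j (x + 1) := by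
  induction j using ENat.recTopCoe with
  | top =>
    rw [kingmanCdf_top, kingmanCdf_top, tprod_eq_zero_mul' ?_]
    · simp only [add_zero, add_assoc, add_comm 1]
    · exact (multipliable_kingmanFactor hc (x + 2)).congr fun l => by ring_nf
  | coe j =>
    rw [kingmanCdf_natCast, kingmanCdf_natCast,
      ← Finset.insert_Icc_add_one_left_eq_Icc (by exact_mod_cast h),
      Finset.prod_insert (by simp)]

theorem kingmanCdf_zero (hc : 0 < c) {j : ℕ∞} (hj : 1 ≤ j) : kingmanCdf c j 0 = 0 := by
  rw [kingmanCdf_eq_mul_succ hc (by simpa [Order.one_le_iff_pos] using hj), zero_add,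
    kingmanFactor_one, zero_mul]

theorem kingmanCdf_self (j : ℕ) : kingmanCdf c j j = 1 := by
  simp [kingmanCdf_natCast]

theorem tendsto_kingmanCdf_top (hc : 0 < c) : Tendsto (kingmanCdf c ⊤) atTop (𝓝 1) := by
  have hlow : Tendsto (fun x : ℕ => 1 - 2 * c / x) atTop (𝓝 1) := by
    simpa using tendsto_const_nhds.sub (tendsto_const_div_atTop_nhds_zero_nat (2 * c))
  refine tendsto_of_tendsto_of_tendsto_of_le_of_le' hlow tendsto_const_nhds ?_
    (Eventually.of_forall fun x => kingmanCdf_le_one hc ⊤ x)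
  filter_upwards [eventually_ge_atTop 1] with x hx
  exact one_sub_le_kingmanCdf hc hx ⊤

end Kingman

section Kernel

variable {c : ℝ}

/-- `pK c j k` is only meaningful for `k ≤ j`; the kernel extends it by zero. -/
def kingmanKernel (c : ℝ) (j : ℕ∞) (k : ℕ) : ℝ := if (k : ℕ∞) ≤ j then pK c j k else 0

theorem pK_nonneg (hc : 0 < c) (j : ℕ∞) (k : ℕ) : 0 ≤ pK c j k :=
  mul_nonneg (kingmanHold_pos hc k).le (kingmanCdf_nonneg hc j k)

theorem pK_le_kingmanHold (hc : 0 < c) (j : ℕ∞) (k : ℕ) : pK c j k ≤ kingmanHold c k :=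
  mul_le_of_le_one_right (kingmanHold_pos hc k).le (kingmanCdf_le_one hc j k)

theorem kingmanKernel_nonneg (hc : 0 < c) (j : ℕ∞) (k : ℕ) : 0 ≤ kingmanKernel c j k := by
  unfold kingmanKernel
  split_ifs
  exacts [pK_nonneg hc j k, le_rfl]

theorem kingmanKernel_le_kingmanHold (hc : 0 < c) (j : ℕ∞) (k : ℕ) :
    kingmanKernel c j k ≤ kingmanHold c k := by
  unfold kingmanKernel
  split_ifs
  exacts [pK_le_kingmanHold hc j k, (kingmanHold_pos hc k).le]

theorem hasSum_mul_kingmanKernel (f : ℕ → ℝ) (j : ℕ) :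
    HasSum (fun k => f k * kingmanKernel c j k) (∑ k ∈ Finset.range (j + 1), f k * pK c j k) := by
  have hsum : HasSum (fun k => f k * kingmanKernel c j k) _ :=
    hasSum_sum_of_ne_finset_zero fun k hk => by
      rw [kingmanKernel, if_neg fun h => hk (Finset.mem_range_succ_iff.2 (by exact_mod_cast h)),
        mul_zero]
  have hterm : ∀ k ∈ Finset.range (j + 1), f k * kingmanKernel c j k = f k * pK c j k :=
    fun k hk => by rw [kingmanKernel, if_pos (by exact_mod_cast Finset.mem_range_succ_iff.1 hk)]
  rwa [Finset.sum_congr rfl hterm] at hsum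

theorem sum_range_pK (hc : 0 < c) {j : ℕ∞} (hj : 1 ≤ j) {x : ℕ} (hx : (x : ℕ∞) ≤ j) :
    ∑ k ∈ Finset.range (x + 1), pK c j k = kingmanCdf c j x := by
  induction x with
  | zero =>
    rw [Finset.sum_range_one, pK_eq_kingmanHold_mul_kingmanCdf, kingmanCdf_zero hc hj, mul_zero]
  | succ x ih =>
    have hlt : (x : ℕ∞) < j := by
      rw [← ENat.natCast_add_one_le_iff]
      exact_mod_cast hx
    rw [Finset.sum_range_succ, ih hlt.le, pK_eq_kingmanHold_mul_kingmanCdf,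
      kingmanCdf_eq_mul_succ hc hlt, kingmanFactor_eq_one_sub hc]
    ring

theorem sum_range_pK_self (hc : 0 < c) {j : ℕ} (hj : 1 ≤ j) :
    ∑ k ∈ Finset.range (j + 1), pK c j k = 1 := by
  rw [sum_range_pK hc (by exact_mod_cast hj) le_rfl, kingmanCdf_self]

theorem hasSum_kingmanKernel (hc : 0 < c) {j : ℕ∞} (hj : 1 ≤ j) :
    HasSum (kingmanKernel c j) 1 := by
  induction j using ENat.recTopCoe with
  | top =>
    rw [show kingmanKernel c ⊤ = pK c ⊤ from funext fun k => if_pos le_top,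
      hasSum_iff_tendsto_nat_of_nonneg (pK_nonneg hc ⊤), ← tendsto_add_atTop_iff_nat 1]
    exact (tendsto_kingmanCdf_top hc).congr fun x => (sum_range_pK hc hj le_top).symm
  | coe j =>
    simpa [sum_range_pK_self hc (j := j) (by exact_mod_cast hj)] using
      hasSum_mul_kingmanKernel (c := c) (fun _ => 1) j

theorem sum_range_mul_pK_le (hc : 0 < c) {j x : ℕ} (hj : 1 ≤ j) (hx : 1 ≤ x) :
    ∑ k ∈ Finset.range (j + 1), (k : ℝ) * pK c j k ≤ x + j * (2 * c / x) := by
  have hpK (s : Finset ℕ) : ∀ k ∈ s, 0 ≤ pK c j k := fun k _ => pK_nonneg hc j k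
  have htotal := sum_range_pK_self hc hj
  rcases le_or_gt x j with hxj | hxj
  · have hhead := sum_range_pK hc (j := j) (by exact_mod_cast hj) (by exact_mod_cast hxj)
    have hsplit := Finset.sum_range_add_sum_Ico (fun k => pK c j k) (by omega : x + 1 ≤ j + 1)
    have hlow := sum_natCast_mul_le_mul_sum (hpK (Finset.range (x + 1)))
      fun k hk => Finset.mem_range_succ_iff.1 hk
    have hhigh := sum_natCast_mul_le_mul_sum (hpK (Finset.Ico (x + 1) (j + 1)))
      fun k hk => Nat.lt_succ_iff.1 (Finset.mem_Ico.1 hk).2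
    have htail : ∑ k ∈ Finset.Ico (x + 1) (j + 1), pK c j k ≤ 2 * c / x := by
      linarith [one_sub_le_kingmanCdf hc hx (j : ℕ∞)]
    rw [← Finset.sum_range_add_sum_Ico _ (by omega : x + 1 ≤ j + 1)]
    rw [hhead] at hlow
    nlinarith [kingmanCdf_le_one hc j x, mul_le_mul_of_nonneg_left htail (Nat.cast_nonneg j)]
  · have hall := sum_natCast_mul_le_mul_sum (hpK (Finset.range (j + 1)))
      fun k hk => Finset.mem_range_succ_iff.1 hk
    rw [htotal, mul_one] at hall
    have : (j : ℝ) < x := by exact_mod_cast hxj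
    have : 0 ≤ (j : ℝ) * (2 * c / x) := by positivity
    linarith

theorem sum_range_mul_pK_le_sqrt (hc : 0 < c) (j : ℕ) :
    ∑ k ∈ Finset.range (j + 1), (k : ℝ) * pK c j k ≤ 1 + 2 * √(2 * c * j) := by
  rcases Nat.eq_zero_or_pos j with rfl | hj
  · simp
  set r := √(2 * c * j)
  have hr : 0 < r := Real.sqrt_pos.2 (by positivity)
  have hrx : r ≤ ⌈r⌉₊ := Nat.le_ceil r
  have hx : 1 ≤ ⌈r⌉₊ := Nat.one_le_iff_ne_zero.2 (by positivity)
  have htail : (j : ℝ) * (2 * c / ⌈r⌉₊) ≤ r := by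
    calc (j : ℝ) * (2 * c / ⌈r⌉₊) = 2 * c * j / ⌈r⌉₊ := by ring
      _ ≤ 2 * c * j / r := div_le_div_of_nonneg_left (by positivity) hr hrx
      _ = r := Real.div_sqrt
  linarith [sum_range_mul_pK_le hc hj hx, Nat.ceil_lt_add_one hr.le]

end Kernel

section Convolution

variable {μ ν : ℕ∞ → ℝ}

theorem conv_nonneg (hμ : 0 ≤ μ) (hν : 0 ≤ ν) (k : ℕ∞) : 0 ≤ conv μ ν k :=
  tsum_nonneg fun p => by
    split_ifs
    exacts [mul_nonneg (hμ _) (hν _), le_rfl]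

theorem hasSum_conv (hμ0 : 0 ≤ μ) (hν0 : 0 ≤ ν) {a b : ℝ} (hμ : HasSum μ a) (hν : HasSum ν b) :
    HasSum (conv μ ν) (a * b) :=
  hasSum_tsum_ite_eq (hμ.mul hν (hμ.summable.mul_of_nonneg hν.summable hμ0 hν0))
    fun p => p.1 + p.2

theorem conv_apply_zero (hμ : μ 0 = 0) : conv μ ν 0 = 0 := by
  refine (tsum_congr fun p => ?_).trans tsum_zero
  split_ifs with h
  · rw [(add_eq_zero.1 h).1, hμ, zero_mul]
  · rfl

theorem conv_apply_top (hμ : μ ⊤ = 0) (hν : ν ⊤ = 0) : conv μ ν ⊤ = 0 := by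
  refine (tsum_congr fun p => ?_).trans tsum_zero
  split_ifs with h
  · rcases WithTop.add_eq_top.1 h with h | h
    · rw [show p.1 = ⊤ from h, hμ, zero_mul]
    · rw [show p.2 = ⊤ from h, hν, mul_zero]
  · rfl

theorem summable_conv_summand (hμ0 : 0 ≤ μ) (hν0 : 0 ≤ ν) (hμ : Summable μ) (hν : Summable ν)
    (k : ℕ∞) : Summable fun p : ℕ∞ × ℕ∞ => if p.1 + p.2 = k then μ p.1 * ν p.2 else 0 := by
  refine (hμ.mul_of_nonneg hν hμ0 hν0).of_nonneg_of_le (fun p => ?_) fun p => ?_ <;>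
    split_ifs <;> first | exact le_rfl | exact mul_nonneg (hμ0 _) (hν0 _)

theorem summable_sqrt_mul_conv (hμ0 : 0 ≤ μ) (hν0 : 0 ≤ ν) (hμ : Summable μ) (hν : Summable ν)
    (hμ' : Summable fun a : ℕ∞ => √(a.toNat : ℝ) * μ a)
    (hν' : Summable fun b : ℕ∞ => √(b.toNat : ℝ) * ν b) :
    Summable fun k : ℕ∞ => √(k.toNat : ℝ) * conv μ ν k := by
  have hsμ : 0 ≤ fun a : ℕ∞ => √(a.toNat : ℝ) * μ a := fun a =>
    mul_nonneg (Real.sqrt_nonneg _) (hμ0 a)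
  have hsν : 0 ≤ fun b : ℕ∞ => √(b.toNat : ℝ) * ν b := fun b =>
    mul_nonneg (Real.sqrt_nonneg _) (hν0 b)
  refine ((hasSum_conv hsμ hν0 hμ'.hasSum hν.hasSum).summable.add
    (hasSum_conv hμ0 hsν hμ.hasSum hν'.hasSum).summable).of_nonneg_of_le
    (fun k => mul_nonneg (Real.sqrt_nonneg _) (conv_nonneg hμ0 hν0 k)) fun k => ?_
  rw [conv, conv, conv, ← tsum_mul_left,
    ← Summable.tsum_add (summable_conv_summand hsμ hν0 hμ' hν k)
      (summable_conv_summand hμ0 hsν hμ hν' k)]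
  refine Summable.tsum_le_tsum (fun p => ?_)
    ((summable_conv_summand hμ0 hν0 hμ hν k).mul_left _)
    ((summable_conv_summand hsμ hν0 hμ' hν k).add (summable_conv_summand hμ0 hsν hμ hν' k))
  split_ifs with h
  · subst h
    nlinarith [ENat.sqrt_toNat_add_le p.1 p.2, mul_nonneg (hμ0 p.1) (hν0 p.2)]
  · simp

end Convolution

section Fc

variable {c : ℝ} {μ : ℕ∞ → ℝ}

theorem FcFin_eq_tsum (c : ℝ) (μ : ℕ∞ → ℝ) (k : ℕ) :
    FcFin c μ k = ∑' j, conv μ μ j * kingmanKernel c j k := by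
  simp only [FcFin, kingmanKernel, mul_ite, mul_zero]

theorem hasSum_conv_mul_kingmanKernel (hc : 0 < c) (hμ : μ 0 = 0) (j : ℕ∞) :
    HasSum (fun k => conv μ μ j * kingmanKernel c j k) (conv μ μ j) := by
  rcases eq_or_ne j 0 with rfl | hj
  · simpa only [conv_apply_zero hμ, zero_mul] using hasSum_zero
  · simpa using (hasSum_kingmanKernel hc (Order.one_le_iff_pos.2 (pos_iff_ne_zero.2 hj))).mul_left
      (conv μ μ j)

theorem hasSum_FcFin (hc : 0 < c) (hμ : IsDist μ) : HasSum (fun k : ℕ => FcFin c μ k) 1 := by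
  have hconv := hasSum_conv hμ.1 hμ.1 hμ.2.2 hμ.2.2
  rw [one_mul] at hconv
  simpa only [FcFin_eq_tsum] using hasSum_tsum_swap_of_nonneg
    (fun q => mul_nonneg (conv_nonneg hμ.1 hμ.1 q.1) (kingmanKernel_nonneg hc q.1 q.2))
    (hasSum_conv_mul_kingmanKernel hc hμ.2.1) hconv

theorem FcFin_zero (hc : 0 < c) (hμ : μ 0 = 0) : FcFin c μ 0 = 0 := by
  rw [FcFin_eq_tsum]
  refine (tsum_congr fun j => ?_).trans tsum_zero
  rcases eq_or_ne j 0 with rfl | hj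
  · rw [conv_apply_zero hμ, zero_mul]
  · rw [kingmanKernel, if_pos (by simp), pK_eq_kingmanHold_mul_kingmanCdf,
      kingmanCdf_zero hc (Order.one_le_iff_pos.2 (pos_iff_ne_zero.2 hj)), mul_zero, mul_zero]

theorem Fc_natCast (hc : 0 < c) (hμ : μ 0 = 0) (n : ℕ) : Fc c μ n = FcFin c μ n := by
  rcases eq_or_ne n 0 with rfl | hn
  · simp [Fc, FcFin_zero hc hμ]
  · simp [Fc, hn]

theorem Fc_top (hc : 0 < c) (hμ : IsDist μ) : Fc c μ ⊤ = 0 := by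
  simp [Fc, (hasSum_FcFin hc hμ).tsum_eq]

theorem Fc_isDist (hc : 0 < c) (hμ : IsDist μ) : IsDist (Fc c μ) := by
  refine ⟨fun k => ?_, by simp [Fc], ?_⟩
  · induction k using ENat.recTopCoe with
    | top => rw [Fc_top hc hμ]
    | coe n =>
      rw [Fc_natCast hc hμ.2.1, FcFin_eq_tsum]
      exact tsum_nonneg fun j =>
        mul_nonneg (conv_nonneg hμ.1 hμ.1 j) (kingmanKernel_nonneg hc j n)
  · exact (ENat.hasSum_natCast_iff (Fc_top hc hμ)).1
      ((hasSum_FcFin hc hμ).congr_fun fun n => Fc_natCast hc hμ.2.1 n)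

theorem Fc_le_kingmanHold (hc : 0 < c) (hμ : IsDist μ) (n : ℕ) : Fc c μ n ≤ kingmanHold c n := by
  have hconv := hasSum_conv hμ.1 hμ.1 hμ.2.2 hμ.2.2
  rw [one_mul] at hconv
  have hle (j : ℕ∞) : conv μ μ j * kingmanKernel c j n ≤ conv μ μ j * kingmanHold c n :=
    mul_le_mul_of_nonneg_left (kingmanKernel_le_kingmanHold hc j n) (conv_nonneg hμ.1 hμ.1 j)
  have hsum := (hconv.mul_right (kingmanHold c n)).summable
  rw [Fc_natCast hc hμ.2.1, FcFin_eq_tsum]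
  calc ∑' j, conv μ μ j * kingmanKernel c j n ≤ ∑' j, conv μ μ j * kingmanHold c n :=
        Summable.tsum_le_tsum hle (hsum.of_nonneg_of_le (fun j =>
          mul_nonneg (conv_nonneg hμ.1 hμ.1 j) (kingmanKernel_nonneg hc j n)) hle) hsum
    _ = kingmanHold c n := by rw [tsum_mul_right, hconv.tsum_eq, one_mul]

theorem summable_sqrt_mul_Fc (hc : 0 < c) (hμ : IsDist μ) :
    Summable fun n : ℕ => √n * Fc c μ n :=
  (summable_sqrt_mul_kingmanHold hc).of_nonneg_of_le
    (fun n => mul_nonneg (Real.sqrt_nonneg _) ((Fc_isDist hc hμ).1 n))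
    fun n => mul_le_mul_of_nonneg_left (Fc_le_kingmanHold hc hμ n) (Real.sqrt_nonneg _)

theorem summable_natCast_mul_tsum_mul_kingmanKernel (hc : 0 < c) {w : ℕ∞ → ℝ} (hw0 : 0 ≤ w)
    (htop : w ⊤ = 0) (hw : Summable w) (hsqrt : Summable fun j : ℕ∞ => √(j.toNat : ℝ) * w j) :
    Summable fun k : ℕ => ∑' j, w j * ((k : ℝ) * kingmanKernel c j k) := by
  set g : ℕ∞ → ℝ := fun j => w j * ∑ k ∈ Finset.range (j.toNat + 1), (k : ℝ) * pK c j k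
  have hrow (j : ℕ∞) : HasSum (fun k : ℕ => w j * ((k : ℝ) * kingmanKernel c j k)) (g j) := by
    induction j using ENat.recTopCoe with
    | top => simp [g, htop, hasSum_zero]
    | coe j => simpa [g] using (hasSum_mul_kingmanKernel (fun k => (k : ℝ)) j).mul_left (w j)
  have hbound : Summable fun j : ℕ∞ => w j * (1 + 2 * √(2 * c) * √(j.toNat : ℝ)) :=
    (hw.add (hsqrt.mul_left (2 * √(2 * c)))).congr fun j => by ring
  have hg : Summable g := by
    refine hbound.of_nonneg_of_le (fun j => (hrow j).nonneg fun k =>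
      mul_nonneg (hw0 j) (mul_nonneg k.cast_nonneg (kingmanKernel_nonneg hc j k))) fun j => ?_
    induction j using ENat.recTopCoe with
    | top => simp [g, htop]
    | coe j =>
      refine mul_le_mul_of_nonneg_left ?_ (hw0 j)
      simpa [← Real.sqrt_mul (by positivity : (0 : ℝ) ≤ 2 * c), mul_assoc] using
        sum_range_mul_pK_le_sqrt hc j
  exact (hasSum_tsum_swap_of_nonneg
    (f := fun q : ℕ∞ × ℕ => w q.1 * ((q.2 : ℝ) * kingmanKernel c q.1 q.2))
    (fun q => mul_nonneg (hw0 q.1) (mul_nonneg q.2.cast_nonneg (kingmanKernel_nonneg hc q.1 q.2)))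
    hrow hg.hasSum).summable

theorem summable_mul_Fc (hc : 0 < c) {ν : ℕ∞ → ℝ} (hν : IsDist ν) (htop : ν ⊤ = 0)
    (hsqrt : Summable fun n : ℕ => √n * ν n) :
    Summable fun n : ℕ => (n : ℝ) * Fc c ν n := by
  have hsqrt' : Summable fun a : ℕ∞ => √(a.toNat : ℝ) * ν a :=
    (ENat.summable_natCast_iff (by simp [htop])).1 (by simpa using hsqrt)
  refine (summable_natCast_mul_tsum_mul_kingmanKernel hc (conv_nonneg hν.1 hν.1)
    (conv_apply_top htop htop) (hasSum_conv hν.1 hν.1 hν.2.2 hν.2.2).summable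
    (summable_sqrt_mul_conv hν.1 hν.1 hν.2.2.summable hν.2.2.summable hsqrt' hsqrt')).congr
    fun n => ?_
  rw [Fc_natCast hc hν.2.1, FcFin_eq_tsum, ← tsum_mul_left]
  exact tsum_congr fun j => by ring

end Fc

theorem isDist_delta {a : ℕ∞} (ha : a ≠ 0) : IsDist (delta a) :=
  ⟨fun k => by unfold delta; split_ifs <;> norm_num, if_neg ha.symm, hasSum_ite_eq a 1⟩

end

/-- For every `c > 0`, `F_c²(δ_∞)` is supported on `ℕ⁺` with finite mean;
consequently `F_c²(μ) ∈ S₁` for every `μ ∈ S`. -/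
theorem Fc_sq_mem_S1 (c : ℝ) (hc : 0 < c) :
    MemS1 (Fc c (Fc c (delta ⊤))) ∧
      ∀ μ : ℕ∞ → ℝ, IsDist μ → MemS1 (Fc c (Fc c μ)) := by
  have hS1 (μ : ℕ∞ → ℝ) (hμ : IsDist μ) : MemS1 (Fc c (Fc c μ)) :=
    have hν := Fc_isDist hc hμ
    ⟨Fc_isDist hc hν, Fc_top hc hν,
      summable_mul_Fc hc hν (Fc_top hc hμ) (summable_sqrt_mul_Fc hc hμ)⟩
  exact ⟨hS1 _ (isDist_delta (by simp)), hS1⟩
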